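/- Let ε be a Fitch map explained by (T,λ) and let T_ε be the ε-tree. Then (T,λ) ≅ T_ε if and only if for every inner edge e = (par(v), v) of T: (1) λ(e) ≠ ∅, and (2) for every color m ∈ λ(e) there exists a leaf y such that no m-edge lies on the path from v to y in (T,λ). -/
import Mathlib


/-- A finite rooted phylogenetic tree on leaf set `X`, with vertex type `V`.
Vertices are encoded via a parent function; `par root = root`. -/
structure PhyloTree (V X : Type) : Type where
  fin : Finite V
  root : V
  par : V → V
  par_root : par root = root
  reach : ∀ v : V, ∃ n : ℕ, par^[n] v = root
  leaf : X → V
  leaf_inj : Function.Injective leaf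
  leaf_isLeaf : ∀ (x : X) (u : V), par u = leaf x → u = leaf x
  leaf_only : ∀ v : V, (∀ u : V, par u = v → u = v) → ∃ x : X, leaf x = v
  root_deg : (∃ x : X, leaf x = root) ∨ 2 ≤ {u : V | par u = root ∧ u ≠ root}.ncard
  inner_deg : ∀ v : V, v ≠ root → (¬ ∃ x : X, leaf x = v) →
      2 ≤ {u : V | par u = v ∧ u ≠ v}.ncard

namespace PhyloTree

variable {V X : Type}

/-- `T.anc u v` : `u` is an ancestor of `v`, i.e. `u ⪯_T v`. -/
def anc (T : PhyloTree V X) (u v : V) : Prop := ∃ n : ℕ, T.par^[n] v = u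

/-- `l` is the last common ancestor of `a` and `b`. -/
def IsLca (T : PhyloTree V X) (l a b : V) : Prop :=
  T.anc l a ∧ T.anc l b ∧ ∀ u : V, T.anc u a → T.anc u b → T.anc u l

/-- The cluster of `v`: the set of leaves below `v`. -/
def cluster (T : PhyloTree V X) (v : V) : Set X := {x : X | T.anc v (T.leaf x)}

/-- The cluster set `C(T)`. -/
def clusterSet (T : PhyloTree V X) : Set (Set X) := {S : Set X | ∃ v : V, S = T.cluster v}

/-- The edge `(par u, u)` lies on the descending path from `a` down to `b`. -/
def edgeOnDown (T : PhyloTree V X) (a b u : V) : Prop :=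
  T.anc a u ∧ u ≠ a ∧ T.anc u b

/-- The edge `(par u, u)` lies on the unique path between `v` and `w`. -/
def edgeOnPath (T : PhyloTree V X) (v w u : V) : Prop :=
  ∃ l : V, T.IsLca l v w ∧ (T.edgeOnDown l v u ∨ T.edgeOnDown l w u)

/-- `T` displays the rooted triple `ab|c`. -/
def Displays (T : PhyloTree V X) (a b c : X) : Prop :=
  ∃ l3 l2 : V, T.IsLca l2 (T.leaf a) (T.leaf b) ∧
    T.IsLca l3 l2 (T.leaf c) ∧ l3 ≠ l2

end PhyloTree

/-- `(T, lab)` explains `ε` : for distinct leaves `x,y`, `m ∈ ε x y` iff there is an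
`m`-edge on the path from `lca(x,y)` down to `y`. -/
def Explains {V X M : Type} (T : PhyloTree V X) (lab : V → Set M)
    (ε : X → X → Set M) : Prop :=
  ∀ x y : X, x ≠ y → ∀ m : M,
    (m ∈ ε x y ↔ ∃ l : V, T.IsLca l (T.leaf x) (T.leaf y) ∧
      ∃ u : V, T.edgeOnDown l (T.leaf y) u ∧ m ∈ lab u)

/-- `ε` is a Fitch map: it is explained by some edge-labeled phylogenetic tree. -/
def IsFitchMap {X M : Type} (ε : X → X → Set M) : Prop :=
  ∃ (V : Type) (T : PhyloTree V X) (lab : V → Set M), Explains T lab ε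

/-- The complementary neighborhood `N_{¬m}[y]`. -/
def Nbr {X M : Type} (ε : X → X → Set M) (m : M) (y : X) : Set X :=
  {x : X | x ≠ y ∧ m ∉ ε x y} ∪ {y}

/-- The collection `N[ε]` of all complementary neighborhoods. -/
def NbrSet {X M : Type} (ε : X → X → Set M) : Set (Set X) :=
  {N : Set X | ∃ (m : M) (y : X), N = Nbr ε m y}

/-- A set system is hierarchy-like if any two members intersect in `∅` or one of them. -/
def HLike {X : Type} (H : Set (Set X)) : Prop :=
  ∀ P ∈ H, ∀ Q ∈ H, P ∩ Q = P ∨ P ∩ Q = Q ∨ P ∩ Q = ∅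

/-- The inequality condition (IC). -/
def IneqCond {X M : Type} (ε : X → X → Set M) : Prop :=
  ∀ (m : M) (y y' : X), y' ∈ Nbr ε m y → (Nbr ε m y').ncard ≤ (Nbr ε m y).ncard


/-- `(T, lab)` is (a representative of) the ε-tree `T_ε`. -/
def IsEpsTree {V X M : Type} (T : PhyloTree V X) (lab : V → Set M)
    (ε : X → X → Set M) : Prop :=
  T.clusterSet = NbrSet ε ∪ {Set.univ} ∪ {S : Set X | ∃ x : X, S = {x}} ∧
  ∀ v : V, v ≠ T.root → lab v = {m : M | ∃ y : X, T.cluster v = Nbr ε m y}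

/-- `(T', lab')` is a coarse-graining of `(T, lab)`. -/
def CoarseGraining {V' V X M : Type} (T' : PhyloTree V' X) (lab' : V' → Set M)
    (T : PhyloTree V X) (lab : V → Set M) : Prop :=
  T'.clusterSet ⊆ T.clusterSet ∧
  ∀ v' : V', v' ≠ T'.root → ∀ v : V, v ≠ T.root →
    T'.cluster v' = T.cluster v → lab' v' ⊆ lab v

/-- Two edge-labeled trees are isomorphic iff each is a coarse-graining of the other. -/
def Isomorphic {V₁ V₂ X M : Type} (T₁ : PhyloTree V₁ X) (lab₁ : V₁ → Set M)
    (T₂ : PhyloTree V₂ X) (lab₂ : V₂ → Set M) : Prop :=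
  CoarseGraining T₁ lab₁ T₂ lab₂ ∧ CoarseGraining T₂ lab₂ T₁ lab₁


namespace PhyloTree

variable {V X : Type} (T : PhyloTree V X)

lemma anc_refl (v : V) : T.anc v v := ⟨0, rfl⟩

lemma anc_trans {u v w : V} (h1 : T.anc u v) (h2 : T.anc v w) : T.anc u w := by
  obtain ⟨a, ha⟩ := h1; obtain ⟨b, hb⟩ := h2
  exact ⟨a + b, by rw [Function.iterate_add_apply, hb, ha]⟩

lemma iterate_par_root (n : ℕ) : T.par^[n] T.root = T.root := by
  induction n with
  | zero => rfl
  | succ n ih => rw [Function.iterate_succ_apply', ih, T.par_root]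

lemma anc_root (v : V) : T.anc T.root v := T.reach v

lemma root_anc {v : V} (h : T.anc v T.root) : v = T.root := by
  obtain ⟨n, hn⟩ := h; rw [T.iterate_par_root] at hn; exact hn.symm

lemma cycle_root {v : V} {c : ℕ} (hc : c ≠ 0) (h : T.par^[c] v = v) : v = T.root := by
  obtain ⟨j, hj⟩ := T.reach v
  have key : ∀ k, T.par^[k * c] v = v := by
    intro k; induction k with
    | zero => simp
    | succ k ih => rw [Nat.succ_mul, Function.iterate_add_apply, h, ih]
  have h1 : 1 ≤ c := Nat.one_le_iff_ne_zero.mpr hc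
  have hle : j ≤ j * c := Nat.le_mul_of_pos_right j (by omega)
  calc v = T.par^[j * c] v := (key j).symm
    _ = T.par^[j * c - j] (T.par^[j] v) := by
        rw [← Function.iterate_add_apply]; congr 1; omega
    _ = T.root := by rw [hj, T.iterate_par_root]

lemma anc_antisymm {u v : V} (h1 : T.anc u v) (h2 : T.anc v u) : u = v := by
  obtain ⟨a, ha⟩ := h1; obtain ⟨b, hb⟩ := h2
  rcases Nat.eq_zero_or_pos (b + a) with h | h
  · have ha0 : a = 0 := by omega
    subst ha0; exact ha.symm
  · have hcyc : T.par^[b + a] v = v := by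
      rw [Function.iterate_add_apply, ha, hb]
    have hv : v = T.root := T.cycle_root (by omega) hcyc
    subst hv
    rw [T.iterate_par_root] at ha; exact ha.symm

lemma leaf_anc {x : X} {w : V} (h : T.anc (T.leaf x) w) : w = T.leaf x := by
  obtain ⟨n, hn⟩ := h
  induction n generalizing w with
  | zero => exact hn
  | succ n ih =>
      rw [Function.iterate_succ_apply] at hn
      exact T.leaf_isLeaf x w (ih hn)

lemma anc_comparable {u v w : V} (h1 : T.anc u w) (h2 : T.anc v w) :
    T.anc u v ∨ T.anc v u := by
  obtain ⟨a, ha⟩ := h1; obtain ⟨b, hb⟩ := h2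
  rcases le_total a b with h | h
  · right
    exact ⟨b - a, by rw [← ha, ← Function.iterate_add_apply]; rw [← hb]; congr 1; omega⟩
  · left
    exact ⟨a - b, by rw [← hb, ← Function.iterate_add_apply]; rw [← ha]; congr 1; omega⟩

lemma exists_isLca (a b : V) : ∃ l, T.IsLca l a b := by
  classical
  obtain ⟨D, hD⟩ := T.reach b
  have hex : ∃ n, T.anc (T.par^[n] b) a := ⟨D, by rw [hD]; exact T.anc_root a⟩
  refine ⟨T.par^[Nat.find hex] b, Nat.find_spec hex, ⟨Nat.find hex, rfl⟩, ?_⟩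
  intro u hua hub
  obtain ⟨k, hk⟩ := hub
  rcases le_or_gt (Nat.find hex) k with h | h
  · exact ⟨k - Nat.find hex, by rw [← Function.iterate_add_apply]; rw [← hk]; congr 1; omega⟩
  · rw [← hk] at hua; exact absurd hua (Nat.find_min hex h)

lemma isLca_unique {l l' a b : V} (h : T.IsLca l a b) (h' : T.IsLca l' a b) : l = l' :=
  T.anc_antisymm (h'.2.2 l h.1 h.2.1) (h.2.2 l' h'.1 h'.2.1)

lemma isLca_left {v w : V} (h : T.anc v w) : T.IsLca v v w :=
  ⟨T.anc_refl v, h, fun _ hu _ => hu⟩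

lemma cluster_root : T.cluster T.root = Set.univ :=
  Set.eq_univ_of_forall fun x => T.anc_root (T.leaf x)

lemma cluster_leaf (x : X) : T.cluster (T.leaf x) = {x} := by
  ext z
  constructor
  · intro hz
    have := T.leaf_anc hz
    exact Set.mem_singleton_iff.mpr (T.leaf_inj this)
  · rintro rfl
    exact T.anc_refl _

lemma cluster_mono {u v : V} (h : T.anc u v) : T.cluster v ⊆ T.cluster u :=
  fun _ hx => T.anc_trans h hx

lemma anc_par {u : V} : T.anc (T.par u) u := ⟨1, rfl⟩

lemma par_ne_of_ne_root {u : V} (h : u ≠ T.root) : T.par u ≠ u := by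
  intro he
  exact h (T.cycle_root (c := 1) one_ne_zero he)

lemma not_leaf_of_strict_desc {v w : V} (h : T.anc v w) (hne : w ≠ v) :
    ¬ ∃ x, T.leaf x = v := by
  rintro ⟨x, rfl⟩
  exact hne (T.leaf_anc h)

lemma cluster_nonempty (v : V) : ∃ x : X, T.anc v (T.leaf x) := by
  have : Finite V := T.fin
  classical
  generalize hn : {w | T.anc v w}.ncard = n
  induction n using Nat.strong_induction_on generalizing v with
  | _ n ih =>
    by_cases hl : ∃ x, T.leaf x = v
    · obtain ⟨x, hx⟩ := hl; exact ⟨x, hx ▸ T.anc_refl v⟩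
    · obtain ⟨u, hu, hne⟩ : ∃ u, T.par u = v ∧ u ≠ v := by
        by_contra h; push_neg at h
        exact hl (T.leaf_only v fun u h' => h u h')
      have hvu : T.anc v u := ⟨1, by simpa using hu⟩
      have hsub : {w | T.anc u w} ⊆ {w | T.anc v w} := fun w hw => T.anc_trans hvu hw
      have hvnot : v ∉ {w | T.anc u w} := fun hv => hne (T.anc_antisymm hv hvu)
      have hss : {w | T.anc u w} ⊂ {w | T.anc v w} :=
        ⟨hsub, fun hsup => hvnot (hsup (T.anc_refl v))⟩
      have hlt : {w | T.anc u w}.ncard < n :=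
        hn ▸ Set.ncard_lt_ncard hss (Set.toFinite _)
      obtain ⟨x, hx⟩ := ih _ hlt u rfl
      exact ⟨x, T.anc_trans hvu hx⟩

lemma two_children {v : V} (h : ¬ ∃ x, T.leaf x = v) :
    2 ≤ {u : V | T.par u = v ∧ u ≠ v}.ncard := by
  by_cases hr : v = T.root
  · subst hr
    rcases T.root_deg with h' | h'
    · exact absurd h' h
    · exact h'
  · exact T.inner_deg v hr h

lemma children_not_anc {p u u' : V} (hu : T.par u = p) (hup : u ≠ p)
    (hu' : T.par u' = p) (hne : u ≠ u') : ¬ T.anc u u' := by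
  rintro ⟨n, hn⟩
  match n, hn with
  | 0, hn => exact hne hn.symm
  | (k+1), hn =>
    rw [Function.iterate_succ_apply, hu'] at hn
    exact hup (T.anc_antisymm ⟨k, hn⟩ (hu ▸ T.anc_par))

lemma cluster_disjoint {u v : V} (h1 : ¬ T.anc u v) (h2 : ¬ T.anc v u)
    {x : X} (hxu : T.anc u (T.leaf x)) (hxv : T.anc v (T.leaf x)) : False := by
  rcases T.anc_comparable hxu hxv with h | h
  exacts [h1 h, h2 h]

lemma cluster_not_eq_of_strict {u v : V} (hanc : T.anc u v) (hne : v ≠ u) :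
    T.cluster u ≠ T.cluster v := by
  classical
  intro h
  have hnl : ¬ ∃ x, T.leaf x = u := T.not_leaf_of_strict_desc hanc hne
  -- minimal k with par^[k] v = u
  have hex : ∃ k, T.par^[k] v = u := hanc
  obtain ⟨k, hk, hmin⟩ : ∃ k, T.par^[k] v = u ∧ ∀ j < k, T.par^[j] v ≠ u :=
    ⟨Nat.find hex, Nat.find_spec hex, fun j hj => Nat.find_min hex hj⟩
  have hk0 : k ≠ 0 := by
    intro h0; rw [h0] at hk; exact hne hk
  have hpc : T.par (T.par^[k-1] v) = u := by
    rw [show k = (k-1) + 1 by omega, Function.iterate_succ_apply'] at hk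
    exact hk
  set c := T.par^[k-1] v with hcdef
  have hcu : c ≠ u := fun he => hmin (k-1) (by omega) he
  have hcv : T.anc c v := ⟨k - 1, rfl⟩
  -- another child
  obtain ⟨u', hu', hne'⟩ := Set.exists_ne_of_one_lt_ncard
    (lt_of_lt_of_le one_lt_two (T.two_children hnl)) c
  obtain ⟨hpu', hu'u⟩ := hu'
  obtain ⟨z, hz⟩ := T.cluster_nonempty u'
  have hzu : T.anc u (T.leaf z) := T.anc_trans (hpu' ▸ T.anc_par) hz
  have hzv : T.anc v (T.leaf z) := by
    have : z ∈ T.cluster u := hzu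
    rw [h] at this; exact this
  have hzc : T.anc c (T.leaf z) := T.anc_trans hcv hzv
  exact T.cluster_disjoint (T.children_not_anc hpc hcu hpu' (Ne.symm hne'))
    (T.children_not_anc hpu' hu'u hpc hne') hzc hz

lemma cluster_inj {u v : V} (h : T.cluster u = T.cluster v) : u = v := by
  by_contra hne
  obtain ⟨x, hx⟩ := T.cluster_nonempty v
  have hx' : T.anc u (T.leaf x) := by
    have : x ∈ T.cluster v := hx
    rw [← h] at this; exact this
  rcases T.anc_comparable hx' hx with hc | hc
  · exact T.cluster_not_eq_of_strict hc (Ne.symm hne) h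
  · exact T.cluster_not_eq_of_strict hc hne h.symm

end PhyloTree

section KeyLemmas

variable {V X M : Type} {ε : X → X → Set M} {T : PhyloTree V X} {lab : V → Set M}

lemma mem_nbr_iff {m : M} {x y : X} :
    x ∈ Nbr ε m y ↔ (x ≠ y ∧ m ∉ ε x y) ∨ x = y := by
  simp only [Nbr, Set.mem_union, Set.mem_setOf_eq, Set.mem_singleton_iff]

/-- Lemma A: everything below `v` is in the neighborhood if no m-edge below `v` on
the path to `y`. -/
lemma cluster_subset_nbr (hexp : Explains T lab ε) {v : V} {y : X} {m : M}
    (hv : T.anc v (T.leaf y))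
    (hno : ∀ u, T.edgeOnDown v (T.leaf y) u → m ∉ lab u) :
    T.cluster v ⊆ Nbr ε m y := by
  intro x hx
  rcases eq_or_ne x y with rfl | hxy
  · exact mem_nbr_iff.mpr (Or.inr rfl)
  refine mem_nbr_iff.mpr (Or.inl ⟨hxy, ?_⟩)
  intro hmem
  obtain ⟨l', hl', u, hu, hmu⟩ := (hexp x y hxy m).mp hmem
  -- v is a common ancestor of leaf x and leaf y, so v is an ancestor of l'
  have hvl : T.anc v l' := hl'.2.2 v hx hv
  obtain ⟨hlu, hune, huy⟩ := hu
  have huv : u ≠ v := by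
    rintro rfl
    exact hune (T.anc_antisymm hlu hvl).symm
  exact hno u ⟨T.anc_trans hvl hlu, huv, huy⟩ hmu

/-- Lemma B: nothing outside the cluster of `v` is in the neighborhood if `m ∈ lab v`. -/
lemma nbr_subset_cluster (hexp : Explains T lab ε) {v : V} {y : X} {m : M}
    (hv : T.anc v (T.leaf y)) (hm : m ∈ lab v) :
    Nbr ε m y ⊆ T.cluster v := by
  intro x hx
  rcases mem_nbr_iff.mp hx with ⟨hxy, hne⟩ | rfl
  · by_contra hxv
    obtain ⟨l, hl⟩ := T.exists_isLca (T.leaf x) (T.leaf y)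
    have hcomp : T.anc v l ∨ T.anc l v := T.anc_comparable hv hl.2.1
    have hlv : T.anc l v := by
      rcases hcomp with h | h
      · exact absurd (T.anc_trans h hl.1) hxv
      · exact h
    have hvl : v ≠ l := by
      rintro rfl
      exact hxv hl.1
    exact hne ((hexp x y hxy m).mpr ⟨l, hl, v, ⟨hlv, hvl, hv⟩, hm⟩)
  · exact hv

lemma nbr_eq_cluster (hexp : Explains T lab ε) {v : V} {y : X} {m : M}
    (hv : T.anc v (T.leaf y)) (hm : m ∈ lab v)
    (hno : ∀ u, T.edgeOnDown v (T.leaf y) u → m ∉ lab u) :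
    Nbr ε m y = T.cluster v :=
  Set.Subset.antisymm (nbr_subset_cluster hexp hv hm) (cluster_subset_nbr hexp hv hno)

/-- Lemma C: the maximal ancestor of `y` with no m-edge below it on the path to `y`. -/
lemma exists_max_clean (T : PhyloTree V X) (lab : V → Set M) (m : M) (y : X) :
    ∃ v : V, T.anc v (T.leaf y) ∧
      (∀ u, T.edgeOnDown v (T.leaf y) u → m ∉ lab u) ∧
      (v = T.root ∨ m ∈ lab v) := by
  classical
  obtain ⟨D, hD⟩ := T.reach (T.leaf y)
  have hP0 : ∀ u, T.edgeOnDown (T.par^[0] (T.leaf y)) (T.leaf y) u → m ∉ lab u := by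
    intro u hu
    obtain ⟨h1, h2, h3⟩ := hu
    exact absurd (T.anc_antisymm h3 h1) h2
  obtain ⟨n, hnle, hPn, hmax⟩ : ∃ n, n ≤ D ∧
      (∀ u, T.edgeOnDown (T.par^[n] (T.leaf y)) (T.leaf y) u → m ∉ lab u) ∧
      ∀ k, n < k → k ≤ D →
        ¬ ∀ u, T.edgeOnDown (T.par^[k] (T.leaf y)) (T.leaf y) u → m ∉ lab u :=
    ⟨Nat.findGreatest
        (fun k => ∀ u, T.edgeOnDown (T.par^[k] (T.leaf y)) (T.leaf y) u → m ∉ lab u) D,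
      Nat.findGreatest_le D,
      Nat.findGreatest_spec (P := fun k => ∀ u,
        T.edgeOnDown (T.par^[k] (T.leaf y)) (T.leaf y) u → m ∉ lab u) (Nat.zero_le D) hP0,
      fun k hk hkD => Nat.findGreatest_is_greatest (P := fun k => ∀ u,
        T.edgeOnDown (T.par^[k] (T.leaf y)) (T.leaf y) u → m ∉ lab u) hk hkD⟩
  set v := T.par^[n] (T.leaf y) with hv
  refine ⟨v, ⟨n, rfl⟩, hPn, ?_⟩
  rcases eq_or_ne v T.root with hr | hr
  · exact Or.inl hr
  right
  have hnD : n ≠ D := by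
    rintro rfl
    exact hr hD
  have hnot := hmax (n + 1) (by omega) (by omega)
  push_neg at hnot
  obtain ⟨u, hu, hmu⟩ := hnot
  obtain ⟨h1, h2, h3⟩ := hu
  -- h1 : anc (par^[n+1] y) u = anc (par v) u
  have hpv : T.par^[n+1] (T.leaf y) = T.par v := by
    rw [hv, Function.iterate_succ_apply']
  rw [hpv] at h1 h2
  -- u and v are both ancestors of leaf y, hence comparable
  have hcomp := T.anc_comparable (w := T.leaf y) h3 ⟨n, rfl⟩
  have huv : u = v := by
    rcases hcomp with h | h
    · -- anc u v
      obtain ⟨a, ha⟩ := h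
      match a, ha with
      | 0, ha => exact ha.symm
      | (b+1), ha =>
        rw [Function.iterate_succ_apply] at ha
        exact absurd (T.anc_antisymm ⟨b, ha⟩ h1) h2
    · rcases eq_or_ne u v with he | he
      · exact he
      · exact absurd hmu (hPn u ⟨h, he, h3⟩)
  rw [← huv]; exact hmu

/-- Lemma D: every neighborhood is a cluster of T. -/
lemma nbr_is_cluster (hexp : Explains T lab ε) (m : M) (y : X) :
    ∃ v : V, Nbr ε m y = T.cluster v ∧ T.anc v (T.leaf y) ∧
      (∀ u, T.edgeOnDown v (T.leaf y) u → m ∉ lab u) ∧ (v = T.root ∨ m ∈ lab v) := by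
  obtain ⟨v, hv, hno, hor⟩ := exists_max_clean T lab m y
  refine ⟨v, ?_, hv, hno, hor⟩
  rcases hor with hr | hm
  · subst hr
    apply Set.Subset.antisymm
    · rw [T.cluster_root]; exact Set.subset_univ _
    · exact cluster_subset_nbr hexp hv hno
  · exact nbr_eq_cluster hexp hv hm hno

/-- Lemma E: if the cluster of a non-root vertex is a neighborhood `N_{¬m}[y]`,
then `m` is on the edge above it. -/
lemma mem_lab_of_cluster_eq_nbr (hexp : Explains T lab ε) {v : V} {m : M} {y : X}
    (hvr : v ≠ T.root) (h : T.cluster v = Nbr ε m y) : m ∈ lab v := by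
  obtain ⟨v', hv', _, _, hor⟩ := nbr_is_cluster hexp (lab := lab) m y
  have : v' = v := T.cluster_inj (hv'.symm.trans h.symm)
  subst this
  rcases hor with hr | hm
  · exact absurd hr hvr
  · exact hm

end KeyLemmas

section PathLemmas

variable {V X M : Type} {ε : X → X → Set M} {T : PhyloTree V X} {lab : V → Set M}

/-- Lemma F: if `m ∈ lab v` and no m-edge lies on the path from `v` to leaf `y`,
then the cluster of `v` equals the neighborhood `N_{¬m}[y]`. -/
lemma cluster_eq_nbr_of_no_medge (hexp : Explains T lab ε) {v : V} {m : M} {y : X}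
    (hm : m ∈ lab v)
    (hno : ¬ ∃ u : V, T.edgeOnPath v (T.leaf y) u ∧ m ∈ lab u) :
    T.cluster v = Nbr ε m y := by
  -- first, y must be below v
  have hv : T.anc v (T.leaf y) := by
    by_contra hvy
    obtain ⟨l, hl⟩ := T.exists_isLca v (T.leaf y)
    have hlv : v ≠ l := by
      rintro rfl
      exact hvy hl.2.1
    exact hno ⟨v, ⟨l, hl, Or.inl ⟨hl.1, hlv, T.anc_refl v⟩⟩, hm⟩
  -- second, no m-edge strictly below v on the way to y
  have hno' : ∀ u, T.edgeOnDown v (T.leaf y) u → m ∉ lab u := by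
    intro u hu hmu
    exact hno ⟨u, ⟨v, T.isLca_left hv, Or.inr hu⟩, hmu⟩
  exact (nbr_eq_cluster hexp hv hm hno').symm

/-- Lemma G: conversely, if the cluster of a non-root vertex `v` equals `N_{¬m}[y]`,
then no m-edge lies on the path from `v` to leaf `y`. -/
lemma no_medge_of_cluster_eq_nbr (hexp : Explains T lab ε) {v : V} {m : M} {y : X}
    (hvr : v ≠ T.root) (h : T.cluster v = Nbr ε m y) :
    ¬ ∃ u : V, T.edgeOnPath v (T.leaf y) u ∧ m ∈ lab u := by
  rintro ⟨u, ⟨l, hl, hcase⟩, hmu⟩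
  -- y is below v since y ∈ Nbr ε m y = cluster v
  have hy : T.anc v (T.leaf y) := by
    have : y ∈ Nbr ε m y := mem_nbr_iff.mpr (Or.inr rfl)
    rw [← h] at this
    exact this
  -- hence the lca of v and leaf y is v itself
  have hlv : l = v := T.isLca_unique hl (T.isLca_left hy)
  subst hlv
  -- the first disjunct is impossible
  have hu : T.edgeOnDown l (T.leaf y) u := by
    rcases hcase with ⟨h1, h2, h3⟩ | hc
    · exact absurd (T.anc_antisymm h3 h1) h2
    · exact hc
  obtain ⟨hlu, hul, huy⟩ := hu
  -- u is not the root
  have hur : u ≠ T.root := by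
    rintro rfl
    exact hvr (T.root_anc hlu)
  -- p := par u
  set p := T.par u with hp
  have hpu : T.par u = p := rfl
  have hpu' : T.anc p u := T.anc_par
  have hup : u ≠ p := fun he => hur (T.cycle_root (c := 1) one_ne_zero he.symm)
  -- l is an ancestor of p
  obtain ⟨k, hk⟩ := hlu
  have hk0 : k ≠ 0 := by
    rintro rfl
    exact hul hk
  have hlp : T.anc l p := by
    refine ⟨k - 1, ?_⟩
    rw [show k = (k-1) + 1 by omega, Function.iterate_succ_apply] at hk
    exact hk
  -- p is not the root
  have hpr : p ≠ T.root := by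
    intro hcon
    rw [hcon] at hlp
    exact hvr (T.root_anc hlp)
  -- p is not a leaf
  have hpl : ¬ ∃ x, T.leaf x = p := by
    rintro ⟨x, hx⟩
    rw [← hx] at hpu'
    exact hup ((T.leaf_anc hpu').trans hx)
  -- another child u' of p, and a leaf z below u'
  obtain ⟨u', hu', hne'⟩ := Set.exists_ne_of_one_lt_ncard
    (lt_of_lt_of_le one_lt_two (T.inner_deg p hpr hpl)) u
  obtain ⟨hpu'', hu'p⟩ := hu'
  obtain ⟨z, hz⟩ := T.cluster_nonempty u'
  have hzny : ¬ T.anc u (T.leaf z) := by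
    intro hcon
    exact T.cluster_disjoint (T.children_not_anc hpu hup hpu'' (Ne.symm hne'))
      (T.children_not_anc hpu'' hu'p hpu hne') hcon hz
  -- z ∈ cluster l = Nbr ε m y
  have hzl : T.anc l (T.leaf z) := T.anc_trans hlp (T.anc_trans (hpu'' ▸ T.anc_par) hz)
  have hzy : z ≠ y := by
    rintro rfl
    exact hzny huy
  have hznbr : z ∈ Nbr ε m y := by rw [← h]; exact hzl
  have hzno : m ∉ ε z y := by
    rcases mem_nbr_iff.mp hznbr with ⟨_, hh⟩ | hh
    · exact hh
    · exact absurd hh hzy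
  -- but p is the lca of z and y, and (par u, u) is an m-edge below it
  have hlca : T.IsLca p (T.leaf z) (T.leaf y) := by
    refine ⟨T.anc_trans (hpu'' ▸ T.anc_par) hz, T.anc_trans hpu' huy, ?_⟩
    intro w hwz hwy
    rcases T.anc_comparable hwy huy with hc | hc
    · -- anc w u
      obtain ⟨c, hc'⟩ := hc
      match c, hc' with
      | 0, hc' =>
        subst hc'
        exact absurd hwz hzny
      | (b+1), hc' =>
        rw [Function.iterate_succ_apply, hpu] at hc'
        exact ⟨b, hc'⟩
    · -- anc u w : impossible since then z below u
      exact absurd (T.anc_trans hc hwz) hzny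
  exact hzno ((hexp z y hzy m).mpr ⟨p, hlca, u, ⟨hpu', hup, huy⟩, hmu⟩)

end PathLemmas

section LeafNbr

variable {V X M : Type} {ε : X → X → Set M} {T : PhyloTree V X} {lab : V → Set M}

lemma nbr_leaf_eq (hexp : Explains T lab ε) {m : M} {x : X}
    (hm : m ∈ lab (T.leaf x)) : Nbr ε m x = {x} := by
  have hno : ∀ u, T.edgeOnDown (T.leaf x) (T.leaf x) u → m ∉ lab u := by
    intro u hu _
    exact hu.2.1 (T.leaf_anc hu.1)
  rw [nbr_eq_cluster hexp (T.anc_refl (T.leaf x)) hm hno, T.cluster_leaf]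

end LeafNbr


/-- a tree `(T,lab)` explaining `ε` is isomorphic to the ε-tree iff
every inner edge has a nonempty label, and for every color `m` on an inner edge
`(par v, v)` there is a leaf `y` with no `m`-edge on the path from `v` to `y`. -/
theorem isomorphic_epsTree_iff {V W X M : Type}
    [Fintype X] [Fintype M] [Nonempty X] [Nonempty M]
    (ε : X → X → Set M)
    (T : PhyloTree V X) (lab : V → Set M) (hexp : Explains T lab ε)
    (That : PhyloTree W X) (labhat : W → Set M) (hhat : IsEpsTree That labhat ε) :
    Isomorphic T lab That labhat ↔
      ∀ v : V, v ≠ T.root → (¬ ∃ x : X, T.leaf x = v) →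
        lab v ≠ ∅ ∧
        ∀ m ∈ lab v, ∃ y : X,
          ¬ ∃ u : V, T.edgeOnPath v (T.leaf y) u ∧ m ∈ lab u := by
  classical
  obtain ⟨hcl, hlab⟩ := hhat
  constructor
  · rintro ⟨⟨hsub1, hlab1⟩, ⟨hsub2, hlab2⟩⟩ v hvr hvleaf
    have hmem : T.cluster v ∈ That.clusterSet := hsub1 ⟨v, rfl⟩
    obtain ⟨w, hw⟩ := hmem
    have hnuniv : T.cluster v ≠ Set.univ := by
      intro hc
      exact hvr (T.cluster_inj (hc.trans T.cluster_root.symm))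
    have hwr : w ≠ That.root := by
      rintro rfl
      exact hnuniv (hw.trans That.cluster_root)
    have hlabw := hlab w hwr
    have hmem' : T.cluster v ∈ That.clusterSet := ⟨w, hw⟩
    rw [hcl] at hmem'
    simp only [Set.mem_union, Set.mem_singleton_iff, Set.mem_setOf_eq] at hmem'
    have hmem2 : T.cluster v ∈ NbrSet ε := by
      rcases hmem' with (h | h) | h
      · exact h
      · exact absurd h hnuniv
      · obtain ⟨x, hx⟩ := h
        exact absurd ⟨x, (T.cluster_inj (hx.trans (T.cluster_leaf x).symm)).symm⟩ hvleaf
    obtain ⟨m₀, y₀, hmy⟩ := hmem2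
    constructor
    · have hm₀w : m₀ ∈ labhat w := by
        rw [hlabw]
        exact ⟨y₀, hw.symm.trans hmy⟩
      have hin : m₀ ∈ lab v := hlab2 w hwr v hvr hw.symm hm₀w
      intro hempty
      rw [hempty] at hin
      exact hin
    · intro m hm
      have hmw : m ∈ labhat w := hlab1 v hvr w hwr hw hm
      rw [hlabw] at hmw
      obtain ⟨y, hy⟩ := hmw
      exact ⟨y, no_medge_of_cluster_eq_nbr hexp hvr (hw.trans hy)⟩
  · intro H
    refine ⟨⟨?_, ?_⟩, ⟨?_, ?_⟩⟩
    · -- clusters of T are clusters of That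
      rintro S ⟨v, rfl⟩
      rw [hcl]
      simp only [Set.mem_union, Set.mem_singleton_iff, Set.mem_setOf_eq]
      by_cases hvr : v = T.root
      · subst hvr
        exact Or.inl (Or.inr T.cluster_root)
      by_cases hvl : ∃ x, T.leaf x = v
      · obtain ⟨x, hx⟩ := hvl
        exact Or.inr ⟨x, by rw [← hx, T.cluster_leaf]⟩
      · obtain ⟨hne, hall⟩ := H v hvr hvl
        obtain ⟨m, hm⟩ := Set.nonempty_iff_ne_empty.mpr hne
        obtain ⟨y, hy⟩ := hall m hm
        exact Or.inl (Or.inl ⟨m, y, cluster_eq_nbr_of_no_medge hexp hm hy⟩)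
    · -- labels: lab v ⊆ labhat w
      intro v hvr w hwr heq m hm
      rw [hlab w hwr]
      by_cases hvl : ∃ x, T.leaf x = v
      · obtain ⟨x, hx⟩ := hvl
        have hmx : m ∈ lab (T.leaf x) := by rw [hx]; exact hm
        exact ⟨x, by rw [← heq, ← hx, T.cluster_leaf, nbr_leaf_eq hexp hmx]⟩
      · obtain ⟨_, hall⟩ := H v hvr hvl
        obtain ⟨y, hy⟩ := hall m hm
        exact ⟨y, by rw [← heq]; exact cluster_eq_nbr_of_no_medge hexp hm hy⟩
    · -- clusters of That are clusters of T
      rintro S hS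
      rw [hcl] at hS
      simp only [Set.mem_union, Set.mem_singleton_iff, Set.mem_setOf_eq] at hS
      rcases hS with (⟨m, y, rfl⟩ | h) | ⟨x, rfl⟩
      · obtain ⟨v, hv, -, -, -⟩ := nbr_is_cluster hexp m y
        exact ⟨v, hv⟩
      · subst h
        exact ⟨T.root, T.cluster_root.symm⟩
      · exact ⟨T.leaf x, (T.cluster_leaf x).symm⟩
    · -- labels: labhat w ⊆ lab v
      intro w hwr v hvr heq m hm
      rw [hlab w hwr] at hm
      obtain ⟨y, hy⟩ := hm
      rw [heq] at hy
      exact mem_lab_of_cluster_eq_nbr hexp hvr hy
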